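/- Let w = (w1, w2) ∈ ℕ₊². If F = (F1, F2) is a polynomial automorphism of ℂ² which is a composition L2 ∘ T ∘ L1 of two affine automorphisms L1, L2 and one triangular map T(x,y) = (x, y + f(x)) with deg f > 1, then (deg_w F1, deg_w F2) belongs to the union of: {(w1, k·w1), (k·w1, w1), (k·w1, k·w1) : k ∈ ℕ₊, k·w1 ≥ w2}, {(w2, k·w2), (k·w2, w2), (k·w2, k·w2) : k ∈ ℕ₊, k·w2 ≥ w1}, and {(w1, w2), (w2, w1), (w̃, w̃)} where w̃ = max{w1, w2}. -/

import Mathlib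

open MvPolynomial

/-- A polynomial map of ℂ², given by its two component polynomials. -/
abbrev PolyMap : Type := MvPolynomial (Fin 2) ℂ × MvPolynomial (Fin 2) ℂ

/-- Composition of polynomial maps: (F ∘ G). -/
noncomputable def pcomp (F G : PolyMap) : PolyMap :=
  (MvPolynomial.aeval ![G.1, G.2] F.1, MvPolynomial.aeval ![G.1, G.2] F.2)

/-- `F` is a polynomial automorphism of ℂ²: it has a polynomial inverse. -/
def IsPolyAut (F : PolyMap) : Prop :=
  ∃ G : PolyMap, pcomp F G = (MvPolynomial.X 0, MvPolynomial.X 1) ∧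
    pcomp G F = (MvPolynomial.X 0, MvPolynomial.X 1)

/-- Weighted degree with `wdeg x = w1`, `wdeg y = w2` (0 on the zero polynomial). -/
noncomputable def wdeg (w1 w2 : ℕ) (p : MvPolynomial (Fin 2) ℂ) : ℕ :=
  p.support.sup fun α => α 0 * w1 + α 1 * w2

/-- An affine automorphism: an automorphism both of whose components have total degree 1. -/
def IsAffineAut (F : PolyMap) : Prop :=
  IsPolyAut F ∧ F.1.totalDegree = 1 ∧ F.2.totalDegree = 1

/-- The triangular map (x, y) ↦ (x, y + f(x)). -/
noncomputable def lowerT (f : Polynomial ℂ) : PolyMap :=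
  (MvPolynomial.X 0,
   MvPolynomial.X 1 + Polynomial.aeval (MvPolynomial.X 0 : MvPolynomial (Fin 2) ℂ) f)

/-- The triangular map (x, y) ↦ (x + f(y), y). -/
noncomputable def upperT (f : Polynomial ℂ) : PolyMap :=
  (MvPolynomial.X 0 + Polynomial.aeval (MvPolynomial.X 1 : MvPolynomial (Fin 2) ℂ) f,
   MvPolynomial.X 1)

/-- `chain L1 f l = T_l ∘ ⋯ ∘ T_1 ∘ L1`, where `T_i = lowerT (f i)` for odd `i`
and `T_i = upperT (f i)` for even `i`. -/
noncomputable def chain (L1 : PolyMap) (f : ℕ → Polynomial ℂ) : ℕ → PolyMap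
  | 0 => L1
  | i + 1 => pcomp (if i % 2 = 0 then lowerT (f (i + 1)) else upperT (f (i + 1))) (chain L1 f i)

/-!
Write `L1 = (u, v)`, so that `F = L2 ∘ (u, v + f(u))`, and let `n = deg f`, `D = deg_w u`.
Since `u` is affine and nonconstant, `D = w i` for a variable `X i` occurring in `u`. A component
`γ + α x + β y` of `L2` gives `F_k = ℓ + β f(u)` with `ℓ = γ + α u + β v` affine. If `β = 0`,
then `deg_w F_k = D`. If `β ≠ 0`, then `deg_w F_k = max (deg_w ℓ) (n D)`: the monomial `X i ^ n`
has coefficient `β · lc f · (coeff of X i in u) ^ n ≠ 0` in `β f(u)` and does not occur in `ℓ`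
because `n ≥ 2`. As `(u, v)` is invertible, the heavier variable occurs in `u` or in `ℓ`, which
turns this into `deg_w F_k = max (max w1 w2) (n D)`. Invertibility of `L2` rules out `β = 0` for
both components, and comparing `n D` with `max w1 w2` yields the listed bidegrees.
-/

namespace MvPolynomial

variable {σ R : Type*}

section CommSemiring

variable [CommSemiring R] {w : σ → ℕ}

theorem weightedTotalDegree_C (r : R) : weightedTotalDegree w (C r : MvPolynomial σ R) = 0 := by
  classical
  refine Nat.eq_zero_of_le_zero (Finset.sup_le fun m hm => ?_)
  rw [mem_support_iff, coeff_C] at hm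
  rw [← (ite_ne_right_iff.1 hm).1, map_zero]

theorem weightedTotalDegree_add_le (p q : MvPolynomial σ R) :
    weightedTotalDegree w (p + q) ≤ max (weightedTotalDegree w p) (weightedTotalDegree w q) := by
  classical
  refine Finset.sup_le fun m hm => ?_
  rcases Finset.mem_union.1 (support_add hm) with h | h
  · exact le_max_of_le_left (le_weightedTotalDegree w h)
  · exact le_max_of_le_right (le_weightedTotalDegree w h)

theorem weightedTotalDegree_mul_le (p q : MvPolynomial σ R) :
    weightedTotalDegree w (p * q) ≤ weightedTotalDegree w p + weightedTotalDegree w q := by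
  classical
  refine Finset.sup_le fun m hm => ?_
  obtain ⟨a, ha, b, hb, rfl⟩ := Finset.mem_add.1 (support_mul p q hm)
  rw [map_add]
  exact add_le_add (le_weightedTotalDegree w ha) (le_weightedTotalDegree w hb)

theorem weightedTotalDegree_C_mul_le (r : R) (p : MvPolynomial σ R) :
    weightedTotalDegree w (C r * p) ≤ weightedTotalDegree w p := by
  simpa [weightedTotalDegree_C] using weightedTotalDegree_mul_le (w := w) (C r) p

theorem weightedTotalDegree_pow_le (p : MvPolynomial σ R) (k : ℕ) :
    weightedTotalDegree w (p ^ k) ≤ k * weightedTotalDegree w p := by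
  induction k with
  | zero => rw [pow_zero, zero_mul, ← C_1, weightedTotalDegree_C]
  | succ k ih =>
    rw [pow_succ, add_one_mul]
    exact (weightedTotalDegree_mul_le _ _).trans (by omega)

theorem weightedTotalDegree_aeval_le (p : MvPolynomial σ R) (f : Polynomial R) :
    weightedTotalDegree w (Polynomial.aeval p f) ≤ f.natDegree * weightedTotalDegree w p := by
  classical
  rw [Polynomial.aeval_eq_sum_range]
  refine Finset.sup_le fun m hm => ?_
  obtain ⟨k, hk, hm⟩ := Finset.mem_biUnion.1 (support_sum hm)
  calc Finsupp.weight w m ≤ weightedTotalDegree w (p ^ k) :=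
        le_weightedTotalDegree w (support_smul hm)
    _ ≤ k * weightedTotalDegree w p := weightedTotalDegree_pow_le p k
    _ ≤ f.natDegree * weightedTotalDegree w p :=
        Nat.mul_le_mul_right _ (Nat.lt_succ_iff.1 (Finset.mem_range.1 hk))

theorem weightedTotalDegree_add_eq_left_of_lt {p q : MvPolynomial σ R}
    (h : weightedTotalDegree w q < weightedTotalDegree w p) :
    weightedTotalDegree w (p + q) = weightedTotalDegree w p := by
  classical
  refine le_antisymm ((weightedTotalDegree_add_le p q).trans (max_le le_rfl h.le)) ?_
  have hp : p.support.Nonempty := by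
    rw [Finset.nonempty_iff_ne_empty]; intro he
    simp [weightedTotalDegree, he] at h
  obtain ⟨m, hm, hmax⟩ := p.support.exists_mem_eq_sup hp (Finsupp.weight w)
  change weightedTotalDegree w p = _ at hmax
  have hq : coeff m q = 0 := by
    by_contra hq
    exact (le_weightedTotalDegree w (mem_support_iff.2 hq)).not_gt (hmax ▸ h)
  rw [hmax]
  exact le_weightedTotalDegree w (by simpa [coeff_add, hq] using hm)

theorem le_weightedTotalDegree_of_mem_vars {p : MvPolynomial σ R} {i : σ} (h : i ∈ p.vars) :
    w i ≤ weightedTotalDegree w p := by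
  obtain ⟨m, hm, hi⟩ := (mem_vars_iff_mem_support i).1 h
  exact (Finsupp.le_weight_of_ne_zero' w (Finsupp.mem_support_iff.1 hi)).trans
    (le_weightedTotalDegree w hm)

theorem le_weightedTotalDegree_of_coeff_single_ne_zero {p : MvPolynomial σ R} {i : σ} {n : ℕ}
    (h : coeff (Finsupp.single i n) p ≠ 0) : n * w i ≤ weightedTotalDegree w p := by
  simpa [Finsupp.weight_single] using le_weightedTotalDegree w (mem_support_iff.2 h)

theorem eq_zero_or_eq_single_one_of_mem_support {p : MvPolynomial σ R} (hp : p.totalDegree ≤ 1)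
    {m : σ →₀ ℕ} (hm : m ∈ p.support) : m = 0 ∨ ∃ i, m = Finsupp.single i 1 := by
  rcases Nat.le_one_iff_eq_zero_or_eq_one.1 ((le_totalDegree hm).trans hp) with h | h
  · exact Or.inl ((Finsupp.degree_eq_zero_iff m).1 h)
  · exact Or.inr ((Finsupp.sum_eq_one_iff _).1 h)

theorem coeff_single_one_ne_zero_of_mem_vars {p : MvPolynomial σ R} (hp : p.totalDegree ≤ 1)
    {i : σ} (h : i ∈ p.vars) : coeff (Finsupp.single i 1) p ≠ 0 := by
  obtain ⟨m, hm, hi⟩ := (mem_vars_iff_mem_support i).1 h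
  rcases eq_zero_or_eq_single_one_of_mem_support hp hm with rfl | ⟨j, rfl⟩
  · simp at hi
  · rw [(Finsupp.mem_support_single _ _ _).1 hi |>.1]
    exact mem_support_iff.1 hm

theorem exists_weightedTotalDegree_eq_of_totalDegree_eq_one {p : MvPolynomial σ R}
    (hp : p.totalDegree = 1) :
    ∃ i, coeff (Finsupp.single i 1) p ≠ 0 ∧ weightedTotalDegree w p = w i := by
  have hne : p.support.Nonempty := by
    rw [Finset.nonempty_iff_ne_empty]; intro he
    simp [totalDegree, he] at hp
  obtain ⟨m, hm, hmax⟩ := p.support.exists_mem_eq_sup hne (Finsupp.weight w)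
  change weightedTotalDegree w p = _ at hmax
  rcases eq_zero_or_eq_single_one_of_mem_support hp.le hm with rfl | ⟨j, rfl⟩
  · obtain ⟨m', hm', hdeg⟩ := p.support.exists_mem_eq_sup hne fun s => s.sum fun _ e => e
    obtain ⟨i, rfl⟩ := (Finsupp.sum_eq_one_iff _).1 (hdeg.symm.trans hp)
    have := le_weightedTotalDegree w hm'
    rw [hmax, map_zero, Finsupp.weight_single, one_smul] at this
    exact ⟨i, mem_support_iff.1 hm', by rw [hmax, map_zero]; omega⟩
  · exact ⟨j, mem_support_iff.1 hm, by rw [hmax, Finsupp.weight_single, one_smul]⟩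

theorem weightedTotalDegree_le_of_totalDegree_le_one {p : MvPolynomial σ R}
    (hp : p.totalDegree ≤ 1) {M : ℕ} (hw : ∀ i, w i ≤ M) :
    weightedTotalDegree w p ≤ M := by
  refine Finset.sup_le fun m hm => ?_
  rcases eq_zero_or_eq_single_one_of_mem_support hp hm with rfl | ⟨i, rfl⟩
  · simp
  · simpa [Finsupp.weight_single] using hw i

theorem eq_C_add_sum_C_mul_X_of_totalDegree_le_one [Fintype σ] {p : MvPolynomial σ R}
    (hp : p.totalDegree ≤ 1) :
    p = C (coeff 0 p) + ∑ i, C (coeff (Finsupp.single i 1) p) * X i := by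
  classical
  ext m
  simp only [coeff_add, coeff_C, coeff_sum, coeff_C_mul, coeff_X, mul_ite, mul_one, mul_zero]
  by_cases hm : m ∈ p.support
  · rcases eq_zero_or_eq_single_one_of_mem_support hp hm with rfl | ⟨j, rfl⟩
    · simp
    · simp [Finsupp.single_left_inj one_ne_zero, eq_comm (a := (0 : σ →₀ ℕ))]
  · have hzero (m' : σ →₀ ℕ) : (if m' = m then coeff m' p else 0) = 0 := by
      split_ifs with h
      · exact h ▸ notMem_support_iff.1 hm
      · rfl
    simp only [hzero, Finset.sum_const_zero, add_zero, notMem_support_iff.1 hm]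

theorem coeff_aeval_piSingle_X [DecidableEq σ] (i : σ) (p : MvPolynomial σ R) (n : ℕ) :
    (aeval (Pi.single i Polynomial.X) p).coeff n = coeff (Finsupp.single i n) p := by
  induction p using MvPolynomial.induction_on generalizing n with
  | C a =>
    rcases eq_or_ne n 0 with rfl | hn
    · simp
    · simp [Polynomial.coeff_C, coeff_C, hn, eq_comm (a := (0 : σ →₀ ℕ))]
  | add p q hp hq => simp [hp, hq]
  | mul_X p j hp =>
    rw [map_mul, aeval_X, coeff_mul_X']
    rcases eq_or_ne j i with rfl | hj
    · cases n with
      | zero => simp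
      | succ n => simp [hp]
    · simp [hj]

end CommSemiring

section IsDomain

variable [CommRing R] [IsDomain R] {w : σ → ℕ}

theorem weightedTotalDegree_C_mul {r : R} (hr : r ≠ 0) (p : MvPolynomial σ R) :
    weightedTotalDegree w (C r * p) = weightedTotalDegree w p := by
  rw [C_mul', weightedTotalDegree, support_smul_eq hr]
  rfl

theorem weightedTotalDegree_C_add_C_mul (γ : R) {α : R} (hα : α ≠ 0) (p : MvPolynomial σ R) :
    weightedTotalDegree w (C γ + C α * p) = weightedTotalDegree w p := by
  rcases Nat.eq_zero_or_pos (weightedTotalDegree w p) with h | h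
  · refine le_antisymm ((weightedTotalDegree_add_le _ _).trans ?_) (h ▸ Nat.zero_le _)
    rw [weightedTotalDegree_C, weightedTotalDegree_C_mul hα, h, max_self]
  · rw [add_comm, weightedTotalDegree_add_eq_left_of_lt, weightedTotalDegree_C_mul hα]
    rwa [weightedTotalDegree_C, weightedTotalDegree_C_mul hα]

theorem coeff_single_natDegree_aeval {u : MvPolynomial σ R} (hu : u.totalDegree ≤ 1) {i : σ}
    (hi : coeff (Finsupp.single i 1) u ≠ 0) (f : Polynomial R) :
    coeff (Finsupp.single i f.natDegree) (Polynomial.aeval u f) =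
      f.leadingCoeff * coeff (Finsupp.single i 1) u ^ f.natDegree := by
  classical
  set r : Polynomial R := aeval (Pi.single i Polynomial.X) u
  have hr1 : r.coeff 1 = coeff (Finsupp.single i 1) u := coeff_aeval_piSingle_X i u 1
  have hr : r.natDegree = 1 := by
    refine le_antisymm (Polynomial.natDegree_le_iff_coeff_eq_zero.2 fun k hk => ?_)
      (Polynomial.le_natDegree_of_ne_zero (hr1 ▸ hi))
    rw [coeff_aeval_piSingle_X]
    refine coeff_eq_zero_of_totalDegree_lt (hu.trans_lt ?_)
    rwa [Finsupp.support_single _ (by omega), Finset.sum_singleton, Finsupp.single_eq_same]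
  have hdeg : (f.comp r).natDegree = f.natDegree := by rw [Polynomial.natDegree_comp, hr, mul_one]
  have hlc : r.leadingCoeff = coeff (Finsupp.single i 1) u := by
    rw [Polynomial.leadingCoeff, hr, hr1]
  rw [← coeff_aeval_piSingle_X, ← Polynomial.aeval_algHom_apply, ← Polynomial.comp_eq_aeval]
  conv_lhs => rw [← hdeg]
  rw [Polynomial.coeff_natDegree, Polynomial.leadingCoeff_comp (q := r) (by omega), hlc]

theorem weightedTotalDegree_add_C_mul_aeval {ℓ u : MvPolynomial σ R} {f : Polynomial R}
    (hℓ : ℓ.totalDegree < f.natDegree) (hu : u.totalDegree = 1) {β : R} (hβ : β ≠ 0) :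
    weightedTotalDegree w (ℓ + C β * Polynomial.aeval u f) =
      max (weightedTotalDegree w ℓ) (f.natDegree * weightedTotalDegree w u) := by
  have hupper : weightedTotalDegree w (C β * Polynomial.aeval u f) ≤
      f.natDegree * weightedTotalDegree w u :=
    (weightedTotalDegree_C_mul_le _ _).trans (weightedTotalDegree_aeval_le u f)
  rcases lt_or_ge (f.natDegree * weightedTotalDegree w u) (weightedTotalDegree w ℓ) with h | h
  · rw [weightedTotalDegree_add_eq_left_of_lt (hupper.trans_lt h), max_eq_left h.le]
  rw [max_eq_right h]
  refine le_antisymm ((weightedTotalDegree_add_le _ _).trans (max_le h hupper)) ?_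
  obtain ⟨i, hi, hwi⟩ := exists_weightedTotalDegree_eq_of_totalDegree_eq_one (w := w) hu
  have hf : f ≠ 0 := by rintro rfl; simp at hℓ
  have hcoeff : coeff (Finsupp.single i f.natDegree) (ℓ + C β * Polynomial.aeval u f) =
      β * (f.leadingCoeff * coeff (Finsupp.single i 1) u ^ f.natDegree) := by
    rw [coeff_add, coeff_C_mul, coeff_single_natDegree_aeval hu.le hi,
      coeff_eq_zero_of_totalDegree_lt, zero_add]
    rwa [Finsupp.support_single _ (by omega), Finset.sum_singleton, Finsupp.single_eq_same]
  exact hwi ▸ le_weightedTotalDegree_of_coeff_single_ne_zero (hcoeff ▸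
    mul_ne_zero hβ (mul_ne_zero (Polynomial.leadingCoeff_ne_zero.2 hf) (pow_ne_zero _ hi)))

end IsDomain
end MvPolynomial

theorem wdeg_eq_weightedTotalDegree (w1 w2 : ℕ) : wdeg w1 w2 = weightedTotalDegree ![w1, w2] := by
  funext p
  refine Finset.sup_congr rfl fun m _ => ?_
  simp [Finsupp.weight_apply, Finsupp.sum_fintype, Fin.sum_univ_two]

theorem IsPolyAut.mem_vars {F : PolyMap} (hF : IsPolyAut F) (j : Fin 2) :
    j ∈ F.1.vars ∨ j ∈ F.2.vars := by
  obtain ⟨G, -, hGF⟩ := hF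
  have hX : X j = bind₁ ![F.1, F.2] (![G.1, G.2] j) := by
    fin_cases j
    · exact (congrArg Prod.fst hGF).symm
    · exact (congrArg Prod.snd hGF).symm
  have hj : j ∈ (X j : MvPolynomial (Fin 2) ℂ).vars := by simp [vars_X]
  obtain ⟨i, -, hi⟩ := mem_vars_bind₁ _ _ (hX ▸ hj)
  fin_cases i
  · exact Or.inl hi
  · exact Or.inr hi

theorem pcomp_lowerT (f : Polynomial ℂ) (L : PolyMap) :
    pcomp (lowerT f) L = (L.1, L.2 + Polynomial.aeval L.1 f) := by
  simp only [pcomp, lowerT, map_add, aeval_X, Matrix.cons_val_zero, Matrix.cons_val_one,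
    ← Polynomial.aeval_algHom_apply]

theorem le_max_weightedTotalDegree_of_isPolyAut {L : PolyMap} (hL : IsPolyAut L)
    (hv : L.2.totalDegree ≤ 1) (w : Fin 2 → ℕ) (γ α : ℂ) {β : ℂ} (hβ : β ≠ 0) (j : Fin 2) :
    w j ≤ max (weightedTotalDegree w L.1)
      (weightedTotalDegree w (C γ + C α * L.1 + C β * L.2)) := by
  rcases hL.mem_vars j with h | h
  · exact le_max_of_le_left (le_weightedTotalDegree_of_mem_vars h)
  by_cases hj : coeff (Finsupp.single j 1) L.1 = 0
  · refine le_max_of_le_right (one_mul (w j) ▸ le_weightedTotalDegree_of_coeff_single_ne_zero ?_)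
    have h0 : (0 : Fin 2 →₀ ℕ) ≠ Finsupp.single j 1 :=
      (Finsupp.single_ne_zero.2 one_ne_zero).symm
    simpa [coeff_add, coeff_C_mul, coeff_C, h0, hj, hβ] using
      coeff_single_one_ne_zero_of_mem_vars hv h
  · exact le_max_of_le_left (one_mul (w j) ▸ le_weightedTotalDegree_of_coeff_single_ne_zero hj)

theorem weightedTotalDegree_C_add_C_mul_add_C_mul_aeval {L : PolyMap} (hL : IsAffineAut L)
    {f : Polynomial ℂ} (hf : 1 < f.natDegree) (γ α : ℂ) {β : ℂ} (hβ : β ≠ 0)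
    (w1 w2 : ℕ) :
    weightedTotalDegree ![w1, w2] (C γ + C α * L.1 + C β * (L.2 + Polynomial.aeval L.1 f)) =
      max (max w1 w2) (f.natDegree * weightedTotalDegree ![w1, w2] L.1) := by
  obtain ⟨hLaut, hu, hv⟩ := hL
  set ℓ := C γ + C α * L.1 + C β * L.2
  have hC_mul (c : ℂ) {p : MvPolynomial (Fin 2) ℂ} (hp : p.totalDegree ≤ 1) :
      (C c * p).totalDegree ≤ 1 :=
    (totalDegree_mul _ _).trans (by simpa using hp)
  have hℓ : ℓ.totalDegree ≤ 1 :=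
    (totalDegree_add _ _).trans <| max_le ((totalDegree_add _ _).trans <|
      max_le (by simp) (hC_mul α hu.le)) (hC_mul β hv.le)
  rw [show C γ + C α * L.1 + C β * (L.2 + Polynomial.aeval L.1 f) =
      ℓ + C β * Polynomial.aeval L.1 f by ring,
    weightedTotalDegree_add_C_mul_aeval (hℓ.trans_lt hf) hu hβ]
  have hw : ∀ i, ![w1, w2] i ≤ max w1 w2 := by simp [Fin.forall_fin_two]
  have hℓM := weightedTotalDegree_le_of_totalDegree_le_one hℓ hw
  have huM := weightedTotalDegree_le_of_totalDegree_le_one hu.le hw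
  obtain ⟨j, hj⟩ : ∃ j, ![w1, w2] j = max w1 w2 := by
    rcases le_total w1 w2 with h | h
    · exact ⟨1, by simp [h]⟩
    · exact ⟨0, by simp [h]⟩
  have hheavy : ![w1, w2] j ≤
      max (weightedTotalDegree ![w1, w2] L.1) (weightedTotalDegree ![w1, w2] ℓ) :=
    le_max_weightedTotalDegree_of_isPolyAut hLaut hv.le ![w1, w2] γ α hβ j
  have hn : weightedTotalDegree ![w1, w2] L.1 ≤ f.natDegree * weightedTotalDegree ![w1, w2] L.1 :=
    Nat.le_mul_of_pos_left _ (by omega)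
  omega

theorem weightedTotalDegree_aeval_lowerT_comp {L : PolyMap} (hL : IsAffineAut L)
    {q : MvPolynomial (Fin 2) ℂ} (hq : q.totalDegree = 1) {f : Polynomial ℂ}
    (hf : 1 < f.natDegree) (w1 w2 : ℕ) :
    weightedTotalDegree ![w1, w2] (aeval ![L.1, L.2 + Polynomial.aeval L.1 f] q) =
      if coeff (Finsupp.single 1 1) q = 0 then weightedTotalDegree ![w1, w2] L.1
      else max (max w1 w2) (f.natDegree * weightedTotalDegree ![w1, w2] L.1) := by
  set γ := coeff 0 q
  set α := coeff (Finsupp.single 0 1) q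
  set β := coeff (Finsupp.single 1 1) q
  have hq_eq : q = C γ + C α * X 0 + C β * X 1 := by
    simpa [Fin.sum_univ_two, add_assoc] using eq_C_add_sum_C_mul_X_of_totalDegree_le_one hq.le
  have hcomp : aeval ![L.1, L.2 + Polynomial.aeval L.1 f] q =
      C γ + C α * L.1 + C β * (L.2 + Polynomial.aeval L.1 f) := by
    conv_lhs => rw [hq_eq]
    simp
  rw [hcomp]
  split_ifs with hβ
  · have hα : α ≠ 0 := by
      rintro hα
      rw [hα, hβ] at hq_eq
      simp [hq_eq] at hq
    rw [hβ, C_0, zero_mul, add_zero, weightedTotalDegree_C_add_C_mul γ hα]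
  · exact weightedTotalDegree_C_add_C_mul_add_C_mul_aeval hL hf γ α hβ w1 w2

def IsLengthOneBidegree (w1 w2 d1 d2 : ℕ) : Prop :=
  (∃ k : ℕ, 0 < k ∧ w2 ≤ k * w1 ∧
    ((d1, d2) = (w1, k * w1) ∨ (d1, d2) = (k * w1, w1) ∨ (d1, d2) = (k * w1, k * w1))) ∨
  (∃ k : ℕ, 0 < k ∧ w1 ≤ k * w2 ∧
    ((d1, d2) = (w2, k * w2) ∨ (d1, d2) = (k * w2, w2) ∨ (d1, d2) = (k * w2, k * w2))) ∨
  (d1, d2) = (w1, w2) ∨ (d1, d2) = (w2, w1) ∨ (d1, d2) = (max w1 w2, max w1 w2)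

theorem isLengthOneBidegree_comm {w1 w2 d1 d2 : ℕ} :
    IsLengthOneBidegree w1 w2 d1 d2 ↔ IsLengthOneBidegree w2 w1 d1 d2 := by
  unfold IsLengthOneBidegree
  rw [max_comm]
  constructor <;> rintro (h | h | h | h | h) <;> simp only [h, true_or, or_true]

theorem isLengthOneBidegree_of_left {w1 w2 n d1 d2 : ℕ} (hn : 0 < n)
    (h : (d1, d2) = (w1, max (max w1 w2) (n * w1)) ∨ (d1, d2) = (max (max w1 w2) (n * w1), w1) ∨
      (d1, d2) = (max (max w1 w2) (n * w1), max (max w1 w2) (n * w1))) :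
    IsLengthOneBidegree w1 w2 d1 d2 := by
  have hle : w1 ≤ n * w1 := Nat.le_mul_of_pos_left w1 hn
  by_cases hw : w2 ≤ n * w1
  · rw [show max (max w1 w2) (n * w1) = n * w1 by omega] at h
    exact Or.inl ⟨n, hn, hw, h⟩
  · rw [show max (max w1 w2) (n * w1) = w2 by omega] at h
    rcases h with h | h | h
    · exact Or.inr (Or.inr (Or.inl h))
    · exact Or.inr (Or.inr (Or.inr (Or.inl h)))
    · exact Or.inr (Or.inr (Or.inr (Or.inr (by rwa [max_eq_right (by omega : w1 ≤ w2)]))))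

theorem isLengthOneBidegree_of {w1 w2 n D d1 d2 : ℕ} (hn : 0 < n) (hD : D = w1 ∨ D = w2)
    (h : (d1, d2) = (D, max (max w1 w2) (n * D)) ∨ (d1, d2) = (max (max w1 w2) (n * D), D) ∨
      (d1, d2) = (max (max w1 w2) (n * D), max (max w1 w2) (n * D))) :
    IsLengthOneBidegree w1 w2 d1 d2 := by
  rcases hD with hD | hD <;> rw [hD] at h
  · exact isLengthOneBidegree_of_left hn h
  · rw [max_comm w1 w2] at h
    exact isLengthOneBidegree_comm.2 (isLengthOneBidegree_of_left hn h)

theorem stmt_5_general (w1 w2 : ℕ) (F L1 L2 : PolyMap)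
    (hL1 : IsAffineAut L1) (hL2 : IsAffineAut L2) (f : Polynomial ℂ) (hf : 1 < f.natDegree)
    (hF : F = pcomp L2 (pcomp (lowerT f) L1))
    (d1 d2 : ℕ) (hd1 : d1 = wdeg w1 w2 F.1) (hd2 : d2 = wdeg w1 w2 F.2) :
    (∃ k : ℕ, 0 < k ∧ w2 ≤ k * w1 ∧
      ((d1, d2) = (w1, k * w1) ∨ (d1, d2) = (k * w1, w1) ∨ (d1, d2) = (k * w1, k * w1))) ∨
    (∃ k : ℕ, 0 < k ∧ w1 ≤ k * w2 ∧
      ((d1, d2) = (w2, k * w2) ∨ (d1, d2) = (k * w2, w2) ∨ (d1, d2) = (k * w2, k * w2))) ∨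
    (d1, d2) = (w1, w2) ∨ (d1, d2) = (w2, w1) ∨ (d1, d2) = (max w1 w2, max w1 w2) := by
  obtain ⟨i, -, hi⟩ :=
    exists_weightedTotalDegree_eq_of_totalDegree_eq_one (w := ![w1, w2]) hL1.2.1
  have hD : weightedTotalDegree ![w1, w2] L1.1 = w1 ∨
      weightedTotalDegree ![w1, w2] L1.1 = w2 := by
    fin_cases i <;> simp [hi]
  have hβ : coeff (Finsupp.single 1 1) L2.1 ≠ 0 ∨ coeff (Finsupp.single 1 1) L2.2 ≠ 0 :=
    (hL2.1.mem_vars 1).imp (coeff_single_one_ne_zero_of_mem_vars hL2.2.1.le)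
      (coeff_single_one_ne_zero_of_mem_vars hL2.2.2.le)
  rw [hF, pcomp_lowerT, wdeg_eq_weightedTotalDegree] at hd1 hd2
  rw [pcomp, weightedTotalDegree_aeval_lowerT_comp hL1 hL2.2.1 hf] at hd1
  rw [pcomp, weightedTotalDegree_aeval_lowerT_comp hL1 hL2.2.2 hf] at hd2
  refine isLengthOneBidegree_of (by omega : 0 < f.natDegree) hD ?_
  split_ifs at hd1 hd2 <;> simp_all

/-- Weighted bidegrees of automorphisms of the form `L2 ∘ T ∘ L1` with `L1, L2` affine and
`T(x,y) = (x, y + f(x))`, `deg f > 1`. -/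
theorem stmt_5 (w1 w2 : ℕ) (hw1 : 0 < w1) (hw2 : 0 < w2) (F L1 L2 : PolyMap)
    (hL1 : IsAffineAut L1) (hL2 : IsAffineAut L2) (f : Polynomial ℂ) (hf : 1 < f.natDegree)
    (hF : F = pcomp L2 (pcomp (lowerT f) L1)) (hAut : IsPolyAut F)
    (d1 d2 : ℕ) (hd1 : d1 = wdeg w1 w2 F.1) (hd2 : d2 = wdeg w1 w2 F.2) :
    (∃ k : ℕ, 0 < k ∧ w2 ≤ k * w1 ∧
      ((d1, d2) = (w1, k * w1) ∨ (d1, d2) = (k * w1, w1) ∨ (d1, d2) = (k * w1, k * w1))) ∨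
    (∃ k : ℕ, 0 < k ∧ w1 ≤ k * w2 ∧
      ((d1, d2) = (w2, k * w2) ∨ (d1, d2) = (k * w2, w2) ∨ (d1, d2) = (k * w2, k * w2))) ∨
    (d1, d2) = (w1, w2) ∨ (d1, d2) = (w2, w1) ∨ (d1, d2) = (max w1 w2, max w1 w2) :=
  stmt_5_general w1 w2 F L1 L2 hL1 hL2 f hf hF d1 d2 hd1 hd2
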